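/- Let k ≥ 1 and let B̄ be the subring of ℤ[τ_1, τ_2, ...]/⟨τ_s^2 + ∑_{i=1}^s (-1)^i δ_{s-i} τ_{s+i}τ_{s-i} : s > k⟩ generated by the elements c_i := δ_i τ_i (δ_i = 1 for i ≤ k, δ_i = 2 for i > k). Then the ring homomorphism ℤ[e_1, ..., e_k] → B̄ defined by e_i ↦ c_i^2 + 2∑_{j=1}^i (-1)^j c_{i+j} c_{i-j} is injective. -/

import Mathlib

open MvPolynomial

/-- `τ_m` in `ℤ[τ_1, τ_2, …]`, with variable `X j` representing `τ_{j+1}`; `τ_0 = 1`. -/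
noncomputable def tauB (m : ℕ) : MvPolynomial ℕ ℤ := if m = 0 then 1 else X (m - 1)

/-- `δ_p = 1` if `p ≤ k`, `δ_p = 2` otherwise. -/
def deltaB (k p : ℕ) : ℤ := if p ≤ k then 1 else 2

/-- The relation `S̄^s : τ_s^2 + ∑_{i=1}^s (-1)^i δ_{s-i} τ_{s+i} τ_{s-i}`. -/
noncomputable def relB (k s : ℕ) : MvPolynomial ℕ ℤ :=
  tauB s ^ 2 + ∑ i ∈ Finset.Icc 1 s,
    ((-1) ^ i : MvPolynomial ℕ ℤ) * C (deltaB k (s - i)) * tauB (s + i) * tauB (s - i)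

/-- The ideal generated by the relations `S̄^s` for `s > k`; the quotient is the stable
cohomology ring `ℍ*(OG_k, ℤ)`. -/
noncomputable def relIdealB (k : ℕ) : Ideal (MvPolynomial ℕ ℤ) :=
  Ideal.span {p : MvPolynomial ℕ ℤ | ∃ s : ℕ, k < s ∧ p = relB k s}

/-- `c_m := δ_m τ_m`. -/
noncomputable def cB (k m : ℕ) : MvPolynomial ℕ ℤ := C (deltaB k m) * tauB m

/-- The homomorphism `ℤ[e_1,…,e_k] → ℤ[τ_1,τ_2,…]/⟨S̄^s : s>k⟩` with
`e_i ↦ c_i^2 + 2 ∑_{j=1}^i (-1)^j c_{i+j} c_{i-j}`; the source variable `X i`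
represents `e_{i+1}`. -/
noncomputable def xiB (k : ℕ) :
    MvPolynomial (Fin k) ℤ →ₐ[ℤ] (MvPolynomial ℕ ℤ ⧸ relIdealB k) :=
  MvPolynomial.aeval fun i : Fin k =>
    Ideal.Quotient.mk (relIdealB k)
      (cB k ((i : ℕ) + 1) ^ 2 +
        2 * ∑ j ∈ Finset.Icc 1 ((i : ℕ) + 1),
          ((-1) ^ j : MvPolynomial ℕ ℤ) * cB k ((i : ℕ) + 1 + j) * cB k ((i : ℕ) + 1 - j))

/-!
Send `τ_m` to the elementary symmetric polynomial `e_m(x_1, …, x_k)`. Since `e_m = 0` for `m > k`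
and every term of `S̄^s` with `s > k` contains `τ_s` or `τ_{s+i}`, this kills the relations, and it
sends every `c_m` to `e_m`. Comparing coefficients of `t^{2i}` in
`∏ (1 + x_j t) · ∏ (1 - x_j t) = ∏ (1 - x_j² t²)` gives
`e_i² + 2 ∑_{j=1}^i (-1)^j e_{i+j} e_{i-j} = e_i(x_1², …, x_k²)`, so the composite sends a polynomial
`p` to `p(e_1(x²), …, e_k(x²))`. This is injective, because the `e_i` are algebraically independent
and `x ↦ x²` is injective.
-/

theorem Finset.sum_range_two_mul_add_one_of_symm {M : Type*} [AddCommMonoid M] (g : ℕ → M)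
    (n : ℕ) (hg : ∀ j ≤ n, g (n - j) = g (n + j)) :
    ∑ a ∈ range (2 * n + 1), g a = g n + 2 • ∑ j ∈ Icc 1 n, g (n + j) := by
  have hlow : ∑ a ∈ range (n + 1), g a = g n + ∑ j ∈ Icc 1 n, g (n + j) := by
    rw [← sum_range_reflect, sum_range_succ', ← Ico_add_one_right_eq_Icc, sum_Ico_eq_sum_range,
      Nat.add_sub_cancel, Nat.sub_zero, add_comm]
    refine congrArg (g n + ·) (sum_congr rfl fun j hj => ?_)
    rw [hg _ (by simp at hj; omega)]
    congr 1
    omega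
  have hhigh : ∑ j ∈ range n, g (n + 1 + j) = ∑ j ∈ Icc 1 n, g (n + j) := by
    rw [← Ico_add_one_right_eq_Icc, sum_Ico_eq_sum_range, Nat.add_sub_cancel]
    exact sum_congr rfl fun j _ => by congr 1; omega
  rw [show 2 * n + 1 = n + 1 + n by omega, sum_range_add, hlow, hhigh, two_nsmul, add_assoc]

namespace Multiset

section CommSemiring

variable {R : Type*} [CommSemiring R]

theorem esymm_cons_succ (a : R) (s : Multiset R) (n : ℕ) :
    (a ::ₘ s).esymm (n + 1) = s.esymm (n + 1) + a * s.esymm n := by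
  simp only [esymm, powersetCard_cons, map_add, sum_add, map_map, Function.comp_def, prod_cons,
    sum_map_mul_left]

theorem coeff_prod_one_add_C_mul_X (s : Multiset R) (n : ℕ) :
    (s.map fun r => 1 + Polynomial.C r * Polynomial.X).prod.coeff n = s.esymm n := by
  induction s using Multiset.induction_on generalizing n with
  | empty => cases n <;> simp [esymm, Polynomial.coeff_one, powersetCard_zero_right]
  | cons a s ih =>
    rw [map_cons, prod_cons, add_mul, one_mul, Polynomial.coeff_add, mul_assoc,
      Polynomial.coeff_C_mul]
    cases n with
    | zero => simp [esymm, ih]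
    | succ n => rw [Polynomial.coeff_X_mul, ih, ih, esymm_cons_succ]

end CommSemiring

section CommRing

variable {R : Type*} [CommRing R]

theorem prod_one_add_C_mul_X_mul_neg (s : Multiset R) :
    (s.map fun r => 1 + Polynomial.C r * Polynomial.X).prod *
        ((s.map Neg.neg).map fun r => 1 + Polynomial.C r * Polynomial.X).prod =
      Polynomial.expand R 2
        ((s.map fun r => -r ^ 2).map fun r => 1 + Polynomial.C r * Polynomial.X).prod := by
  have hfactor : ∀ r : R,
      (1 + Polynomial.C r * Polynomial.X) * (1 + Polynomial.C (-r) * Polynomial.X) =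
        Polynomial.expand R 2 (1 + Polynomial.C (-r ^ 2) * Polynomial.X) := fun r => by
    simp only [_root_.map_add, _root_.map_one, _root_.map_mul, Polynomial.expand_C,
      Polynomial.expand_X, _root_.map_neg, _root_.map_pow]
    ring
  simp only [map_map, Function.comp_def, ← prod_map_mul, map_multiset_prod, hfactor]

theorem esymm_sq_add_two_mul_sum (s : Multiset R) (n : ℕ) :
    s.esymm n ^ 2 + 2 * ∑ j ∈ Finset.Icc 1 n, (-1) ^ j * s.esymm (n + j) * s.esymm (n - j) =
      (s.map (· ^ 2)).esymm n := by
  have h := congrArg (Polynomial.coeff · (2 * n)) (prod_one_add_C_mul_X_mul_neg s)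
  simp only [Polynomial.coeff_mul, coeff_prod_one_add_C_mul_X, esymm_neg,
    Polynomial.coeff_expand two_pos, dvd_mul_right, if_true, Nat.mul_div_cancel_left _ two_pos] at h
  have hsign : ∀ j ≤ n, (-1 : R) ^ (n - j) = (-1) ^ n * (-1) ^ j := fun j hj => by
    rw [← pow_add]
    exact neg_one_pow_congr (by grind)
  rw [show (fun r : R => -r ^ 2) = Neg.neg ∘ (· ^ 2) from rfl, ← map_map, esymm_neg,
    Finset.Nat.sum_antidiagonal_eq_sum_range_succ_mk,
    Finset.sum_range_two_mul_add_one_of_symm _ _ fun j hj => ?symm] at h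
  case symm =>
    simp only [show 2 * n - (n - j) = n + j by omega, show 2 * n - (n + j) = n - j by omega,
      hsign j hj, pow_add]
    ring
  have hfold : ∑ j ∈ Finset.Icc 1 n,
        s.esymm (n + j) * ((-1) ^ (2 * n - (n + j)) * s.esymm (2 * n - (n + j))) =
      (-1) ^ n * ∑ j ∈ Finset.Icc 1 n, (-1) ^ j * s.esymm (n + j) * s.esymm (n - j) := by
    rw [Finset.mul_sum]
    refine Finset.sum_congr rfl fun j hj => ?_
    rw [show 2 * n - (n + j) = n - j by omega, hsign j (Finset.mem_Icc.mp hj).2]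
    ring
  have hsq : ((-1 : R) ^ n) ^ 2 = 1 := by rw [← pow_mul, pow_mul', neg_one_sq, one_pow]
  rw [hfold, nsmul_eq_mul, show 2 * n - n = n by omega] at h
  set S := ∑ j ∈ Finset.Icc 1 n, (-1) ^ j * s.esymm (n + j) * s.esymm (n - j)
  linear_combination (-1) ^ n * h - (s.esymm n ^ 2 + 2 * S - (s.map (· ^ 2)).esymm n) * hsq

end CommRing

end Multiset

namespace MvPolynomial

variable {σ R : Type*} [Fintype σ]

theorem esymm_eq_zero_of_card_lt [CommSemiring R] {n : ℕ} (h : Fintype.card σ < n) :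
    esymm σ R n = 0 := by
  rw [esymm, Finset.powersetCard_eq_empty.mpr (by simpa using h), Finset.sum_empty]

theorem esymm_sq_add_two_mul_sum [CommRing R] (n : ℕ) :
    esymm σ R n ^ 2 + 2 * ∑ j ∈ Finset.Icc 1 n, (-1) ^ j * esymm σ R (n + j) * esymm σ R (n - j) =
      expand 2 (esymm σ R n) := by
  have hexpand : expand 2 (esymm σ R n) =
      (Finset.univ.val.map fun i => (X i : MvPolynomial σ R) ^ 2).esymm n :=
    aeval_esymm_eq_multiset_esymm σ R n _
  rw [hexpand, ← Function.comp_def (· ^ 2) X, ← Multiset.map_map, esymm_eq_multiset_esymm]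
  exact Multiset.esymm_sq_add_two_mul_sum _ n

end MvPolynomial

section Specialization

variable (k : ℕ)

noncomputable def tauToEsymm : MvPolynomial ℕ ℤ →ₐ[ℤ] MvPolynomial (Fin k) ℤ :=
  aeval fun j => esymm (Fin k) ℤ (j + 1)

theorem tauToEsymm_tauB (m : ℕ) : tauToEsymm k (tauB m) = esymm (Fin k) ℤ m := by
  rcases m with _ | m
  · rw [tauB, if_pos rfl, map_one, esymm_zero]
  · rw [tauB, if_neg m.succ_ne_zero, tauToEsymm, aeval_X, Nat.add_sub_cancel]

theorem tauToEsymm_cB (m : ℕ) : tauToEsymm k (cB k m) = esymm (Fin k) ℤ m := by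
  rw [cB, map_mul, tauToEsymm_tauB, tauToEsymm, aeval_C, deltaB]
  split_ifs with h
  · rw [map_one, one_mul]
  · rw [esymm_eq_zero_of_card_lt (by simpa using h), mul_zero]

theorem tauToEsymm_relB {s : ℕ} (h : k < s) : tauToEsymm k (relB k s) = 0 := by
  have hvanish : ∀ m, k < m → tauToEsymm k (tauB m) = 0 := fun m hm => by
    rw [tauToEsymm_tauB, esymm_eq_zero_of_card_lt (by simpa using hm)]
  rw [relB, map_add, map_pow, hvanish s h, map_sum, Finset.sum_eq_zero fun i _ => ?_]
  · ring
  · rw [map_mul, map_mul, hvanish (s + i) (by omega), mul_zero, zero_mul]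

theorem relIdealB_le_ker_tauToEsymm : relIdealB k ≤ RingHom.ker (tauToEsymm k) := by
  rw [relIdealB, Ideal.span_le]
  rintro p ⟨s, hs, rfl⟩
  exact tauToEsymm_relB k hs

noncomputable def tauToEsymmQuot : MvPolynomial ℕ ℤ ⧸ relIdealB k →ₐ[ℤ] MvPolynomial (Fin k) ℤ :=
  Ideal.Quotient.liftₐ (relIdealB k) (tauToEsymm k) (relIdealB_le_ker_tauToEsymm k)

theorem tauToEsymmQuot_mk (p : MvPolynomial ℕ ℤ) :
    tauToEsymmQuot k (Ideal.Quotient.mk (relIdealB k) p) = tauToEsymm k p :=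
  rfl

theorem tauToEsymmQuot_comp_xiB :
    (tauToEsymmQuot k).comp (xiB k) =
      (expand 2).comp (aeval fun i : Fin k => esymm (Fin k) ℤ ((i : ℕ) + 1)) := by
  refine algHom_ext fun i => ?_
  rw [AlgHom.comp_apply, AlgHom.comp_apply, xiB, aeval_X, aeval_X, tauToEsymmQuot_mk]
  simp only [map_add, map_mul, map_pow, map_sum, map_neg, map_one, map_ofNat, tauToEsymm_cB]
  exact esymm_sq_add_two_mul_sum _

theorem xiB_X_mem_adjoin (i : Fin k) :
    xiB k (X i) ∈
      Algebra.adjoin ℤ (Set.range fun m : ℕ => Ideal.Quotient.mk (relIdealB k) (cB k m)) := by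
  have hc : ∀ m, Ideal.Quotient.mk (relIdealB k) (cB k m) ∈
      Algebra.adjoin ℤ (Set.range fun m : ℕ => Ideal.Quotient.mk (relIdealB k) (cB k m)) :=
    fun m => Algebra.subset_adjoin ⟨m, rfl⟩
  rw [xiB, aeval_X]
  simp only [map_add, map_mul, map_pow, map_sum, map_neg, map_one, map_ofNat]
  exact add_mem (pow_mem (hc _) 2) (mul_mem (ofNat_mem _ 2) (sum_mem fun j _ =>
    mul_mem (mul_mem (pow_mem (neg_mem (one_mem _)) j) (hc _)) (hc _)))

end Specialization

theorem stmt14_general (k : ℕ) :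
    (∀ i : Fin k, xiB k (X i) ∈
        Algebra.adjoin ℤ (Set.range fun m : ℕ => Ideal.Quotient.mk (relIdealB k) (cB k m))) ∧
      Function.Injective (xiB k) := by
  refine ⟨xiB_X_mem_adjoin k, fun p q hpq => ?_⟩
  have hesymm : Function.Injective (aeval fun i : Fin k => esymm (Fin k) ℤ ((i : ℕ) + 1)) :=
    fun p q h => esymmAlgHom_fin_injective ℤ le_rfl (Subtype.ext (by simpa [esymmAlgHom_apply]))
  have hcomp := congrArg (tauToEsymmQuot k) hpq
  rw [← AlgHom.comp_apply, ← AlgHom.comp_apply, tauToEsymmQuot_comp_xiB] at hcomp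
  exact hesymm (expand_injective two_pos hcomp)

/-- Theorem B, algebraic form: the above homomorphism lands in the subring
`B̄` generated by the elements `c_i`, and it is injective. -/
theorem stmt14 (k : ℕ) (hk : 1 ≤ k) :
    (∀ i : Fin k, xiB k (X i) ∈
        Algebra.adjoin ℤ (Set.range fun m : ℕ => Ideal.Quotient.mk (relIdealB k) (cB k m))) ∧
      Function.Injective (xiB k) :=
  stmt14_general k
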